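/- arXiv:1212.4310 — 3 statements merged into one kernel-verified Lean document; each statement's English description precedes it below -/
import Mathlib

section
/- Let (F, ξ) : (C, D, η) → (C', D', η') be a morphism of categories with duality whose underlying functor F is an equivalence of categories. Then (F, ξ) is an equivalence of categories with duality: there exists a morphism of categories with duality (G, χ) : (C', D', η') → (C, D, η) together with natural isomorphisms ε : (F,ξ)∘(G,χ) ⇒ id and μ : id ⇒ (G,χ)∘(F,ξ) which are natural transformations of morphisms of categories with duality (i.e., compatible with ξ and χ in the sense that the appropriate squares involving D, D', ξ, χ commute). -/
/-!
Take for `G` an inverse of `F`, with counit `ε` and unit `μ`. Since `F` is faithful, the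
compatibility of `ε` with the dualities forces `F(χ_x) = ε_{D'x} ≫ D'(ε_x) ≫ ξ⁻¹_{Gx}`, and this
formula, pulled back along the fully faithful `F`, defines `χ`. The compatibility of `μ` then follows
from the triangle identity `F μ ≫ ε F = 𝟙`, and that `(G, χ)` respects the units `η, η'` is the
corresponding condition for `(F, ξ)`, transported through `F`.
-/

open CategoryTheory Opposite

namespace CategoryWithDuality

variable {C C' : Type*} [Category C] [Category C'] {D : Cᵒᵖ ⥤ C} {D' : C'ᵒᵖ ⥤ C'}

def IsDualityMorphism (η : 𝟭 C ≅ D.rightOp ⋙ D) (η' : 𝟭 C' ≅ D'.rightOp ⋙ D') (F : C ⥤ C')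
    (ξ : D ⋙ F ≅ F.op ⋙ D') : Prop :=
  ∀ c : C, F.map (η.hom.app c) ≫ ξ.hom.app (op (D.obj (op c))) =
    η'.hom.app (F.obj c) ≫ D'.map (ξ.hom.app (op c)).op

variable (E : C ≌ C') (ξ : D ⋙ E.functor ≅ E.functor.op ⋙ D')

noncomputable def inverseDualityIso : D' ⋙ E.inverse ≅ E.inverse.op ⋙ D :=
  NatIso.ofComponents
    (fun x => E.functor.preimageIso (E.counitIso.app (D'.obj x) ≪≫
      D'.mapIso (E.counitIso.app x.unop).op ≪≫ (ξ.app (op (E.inverse.obj x.unop))).symm))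
    (fun {x y} f => E.functor.map_injective (by
      have hε : f ≫ (E.counit.app y.unop).op =
          (E.counit.app x.unop).op ≫ (E.functor.map (E.inverse.map f.unop)).op :=
        Quiver.Hom.unop_inj (by simp)
      have hξ := ξ.inv.naturality (E.inverse.map f.unop).op
      dsimp at hξ
      have h : D'.map f ≫ D'.map (E.counit.app y.unop).op ≫ ξ.inv.app (op (E.inverse.obj y.unop)) =
          D'.map (E.counit.app x.unop).op ≫ ξ.inv.app (op (E.inverse.obj x.unop)) ≫
            E.functor.map (D.map (E.inverse.map f.unop).op) := by
        rw [← hξ, ← D'.map_comp_assoc, ← D'.map_comp_assoc, hε]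
      simpa using h))

@[simp]
lemma functor_map_inverseDualityIso_hom_app (x : C') :
    E.functor.map ((inverseDualityIso E ξ).hom.app (op x)) =
      E.counit.app (D'.obj (op x)) ≫ D'.map (E.counit.app x).op ≫
        ξ.inv.app (op (E.inverse.obj x)) := by
  simp [inverseDualityIso]

lemma functor_map_inverseDualityIso_hom_app_comp (x : C') :
    E.functor.map ((inverseDualityIso E ξ).hom.app (op x)) ≫ ξ.hom.app (op (E.inverse.obj x)) =
      E.counit.app (D'.obj (op x)) ≫ D'.map (E.counit.app x).op := by
  simp

lemma unit_app_comp_inverseDualityIso_hom_app (c : C) :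
    E.unit.app (D.obj (op c)) ≫ E.inverse.map (ξ.hom.app (op c)) ≫
      (inverseDualityIso E ξ).hom.app (op (E.functor.obj c)) ≫ D.map (E.unit.app c).op =
        𝟙 (D.obj (op c)) := by
  apply E.functor.map_injective
  have h := ξ.inv.naturality (E.unit.app c).op
  dsimp at h
  simp [Equivalence.fun_inv_map, ← h, ← D'.map_comp_assoc, ← op_comp]

lemma isDualityMorphism_inverse {η : 𝟭 C ≅ D.rightOp ⋙ D} {η' : 𝟭 C' ≅ D'.rightOp ⋙ D'}
    (hξ : IsDualityMorphism η η' E.functor ξ) :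
    IsDualityMorphism η' η E.inverse (inverseDualityIso E ξ) := by
  intro x
  apply E.functor.map_injective
  have hη : E.functor.map (η.hom.app (E.inverse.obj x)) =
      η'.hom.app (E.functor.obj (E.inverse.obj x)) ≫ D'.map (ξ.hom.app (op (E.inverse.obj x))).op ≫
        ξ.inv.app (op (D.obj (op (E.inverse.obj x)))) := by
    simp [← reassoc_of% hξ (E.inverse.obj x)]
  have hξχ := ξ.inv.naturality ((inverseDualityIso E ξ).hom.app (op x)).op
  have hη' := η'.hom.naturality (E.counit.app x)
  dsimp at hξχ hη'
  simp only [Functor.map_comp, hη, Category.assoc, ← hξχ, ← D'.map_comp_assoc, ← op_comp,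
    functor_map_inverseDualityIso_hom_app_comp]
  simp [Equivalence.fun_inv_map, reassoc_of% hη']

end CategoryWithDuality

theorem stmt1_general {C C' : Type*} [Category C] [Category C']
    (D : Cᵒᵖ ⥤ C) (η : 𝟭 C ≅ D.rightOp ⋙ D)
    (D' : C'ᵒᵖ ⥤ C') (η' : 𝟭 C' ≅ D'.rightOp ⋙ D')
    (F : C ⥤ C') (ξ : D ⋙ F ≅ F.op ⋙ D')
    (hξ : ∀ c : C, F.map (η.hom.app c) ≫ ξ.hom.app (op (D.obj (op c))) =
      η'.hom.app (F.obj c) ≫ D'.map (ξ.hom.app (op c)).op)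
    [F.IsEquivalence] :
    ∃ (G : C' ⥤ C) (χ : D' ⋙ G ≅ G.op ⋙ D),
      -- (G, χ) is a morphism of categories with duality
      (∀ c' : C', G.map (η'.hom.app c') ≫ χ.hom.app (op (D'.obj (op c'))) =
        η.hom.app (G.obj c') ≫ D.map (χ.hom.app (op c')).op) ∧
      ∃ (ε : G ⋙ F ≅ 𝟭 C') (μ : 𝟭 C ≅ F ⋙ G),
        -- ε : (F,ξ)∘(G,χ) ⇒ id is a natural transformation of morphisms of
        -- categories with duality
        (∀ c' : C', F.map (χ.hom.app (op c')) ≫ ξ.hom.app (op (G.obj c')) =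
          ε.hom.app (D'.obj (op c')) ≫ D'.map (ε.hom.app c').op) ∧
        -- μ : id ⇒ (G,χ)∘(F,ξ) is a natural transformation of morphisms of
        -- categories with duality
        (∀ c : C, μ.hom.app (D.obj (op c)) ≫ G.map (ξ.hom.app (op c)) ≫
            χ.hom.app (op (F.obj c)) ≫ D.map (μ.hom.app c).op = 𝟙 (D.obj (op c))) := by
  let E := F.asEquivalence
  exact ⟨E.inverse, CategoryWithDuality.inverseDualityIso E ξ,
    CategoryWithDuality.isDualityMorphism_inverse E ξ hξ, E.counitIso, E.unitIso,
    CategoryWithDuality.functor_map_inverseDualityIso_hom_app_comp E ξ,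
    CategoryWithDuality.unit_app_comp_inverseDualityIso_hom_app E ξ⟩

/-- A morphism of categories with duality `(F, ξ)` whose underlying functor `F` is an
equivalence of categories is an equivalence of categories with duality: there is an inverse
morphism `(G, χ)` and natural isomorphisms `ε : (F,ξ)∘(G,χ) ⇒ id`, `μ : id ⇒ (G,χ)∘(F,ξ)`
which are natural transformations of morphisms of categories with duality. -/
theorem stmt1 {C C' : Type*} [Category C] [Category C']
    (D : Cᵒᵖ ⥤ C) (η : 𝟭 C ≅ D.rightOp ⋙ D)
    (htriC : ∀ c : C, η.hom.app (D.obj (op c)) ≫ D.map (η.hom.app c).op = 𝟙 (D.obj (op c)))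
    (D' : C'ᵒᵖ ⥤ C') (η' : 𝟭 C' ≅ D'.rightOp ⋙ D')
    (htriC' : ∀ c : C',
      η'.hom.app (D'.obj (op c)) ≫ D'.map (η'.hom.app c).op = 𝟙 (D'.obj (op c)))
    (F : C ⥤ C') (ξ : D ⋙ F ≅ F.op ⋙ D')
    (hξ : ∀ c : C, F.map (η.hom.app c) ≫ ξ.hom.app (op (D.obj (op c))) =
      η'.hom.app (F.obj c) ≫ D'.map (ξ.hom.app (op c)).op)
    [F.IsEquivalence] :
    ∃ (G : C' ⥤ C) (χ : D' ⋙ G ≅ G.op ⋙ D),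
      -- (G, χ) is a morphism of categories with duality
      (∀ c' : C', G.map (η'.hom.app c') ≫ χ.hom.app (op (D'.obj (op c'))) =
        η.hom.app (G.obj c') ≫ D.map (χ.hom.app (op c')).op) ∧
      ∃ (ε : G ⋙ F ≅ 𝟭 C') (μ : 𝟭 C ≅ F ⋙ G),
        -- ε : (F,ξ)∘(G,χ) ⇒ id is a natural transformation of morphisms of
        -- categories with duality
        (∀ c' : C', F.map (χ.hom.app (op c')) ≫ ξ.hom.app (op (G.obj c')) =
          ε.hom.app (D'.obj (op c')) ≫ D'.map (ε.hom.app c').op) ∧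
        -- μ : id ⇒ (G,χ)∘(F,ξ) is a natural transformation of morphisms of
        -- categories with duality
        (∀ c : C, μ.hom.app (D.obj (op c)) ≫ G.map (ξ.hom.app (op c)) ≫
            χ.hom.app (op (F.obj c)) ≫ D.map (μ.hom.app c).op = 𝟙 (D.obj (op c))) :=
  stmt1_general D η D' η' F ξ hξ
end

section
/- Let (C, D, η) be a category with duality. Define the category 𝒟C whose objects are triples (c, d, φ) with φ : d → D(c) an isomorphism in C, and whose morphisms (c,d,φ) → (c',d',φ') are pairs (a : c → c', b : d' → d) with φ ∘ b = D(a) ∘ φ'. Define 𝔇 : (𝒟C)^op → 𝒟C on objects by 𝔇(c,d,φ) = (d, c, D(φ) ∘ η_c) and on morphisms by 𝔇(a,b) = (b,a). Then 𝔇 is a well-defined functor and 𝔇 ∘ 𝔇^op is the identity functor, i.e. 𝔇 is a strict duality on 𝒟C. -/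
/-!
Applying `𝔇` twice returns `(c, d, ψ)` with `ψ = D(D φ ∘ η_c) ∘ η_d` and swaps the components of a
morphism back. Naturality of `η` rewrites `ψ` as `D(η_c) ∘ η_{D c} ∘ φ`, which is `φ` by the
triangle identity.
-/

open CategoryTheory Opposite

variable {C : Type*} [Category C]

/-- Objects of `𝒟C`: triples `(c, d, φ)` with `φ : d ≅ D(c)`. -/
structure DObj (D : Cᵒᵖ ⥤ C) where
  c : C
  d : C
  φ : d ≅ D.obj (op c)

variable {D : Cᵒᵖ ⥤ C}

/-- Morphisms of `𝒟C`: pairs `(a : c ⟶ c', b : d' ⟶ d)` with `φ ∘ b = D(a) ∘ φ'`. -/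
@[ext]
structure DHom (X Y : DObj D) where
  a : X.c ⟶ Y.c
  b : Y.d ⟶ X.d
  comm : b ≫ X.φ.hom = Y.φ.hom ≫ D.map a.op

instance : Category (DObj D) where
  Hom := DHom
  id X := ⟨𝟙 _, 𝟙 _, by simp⟩
  comp f g := ⟨f.a ≫ g.a, g.b ≫ f.b, by
    rw [Category.assoc, f.comm, ← Category.assoc, g.comm, Category.assoc,
      ← Functor.map_comp, ← op_comp]⟩
  id_comp f := DHom.ext (Category.id_comp _) (Category.comp_id _)
  comp_id f := DHom.ext (Category.comp_id _) (Category.id_comp _)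
  assoc f g h := DHom.ext (Category.assoc _ _ _) (Category.assoc _ _ _).symm

/-- The strict duality `𝔇` on `𝒟C`, given on objects by
`𝔇(c,d,φ) = (d, c, D(φ) ∘ η_c)` and on morphisms by `𝔇(a,b) = (b,a)`. -/
def strictD (η : 𝟭 C ≅ D.rightOp ⋙ D) : (DObj D)ᵒᵖ ⥤ DObj D where
  obj X := ⟨X.unop.d, X.unop.c, η.app X.unop.c ≪≫ D.mapIso X.unop.φ.op⟩
  map f := ⟨f.unop.b, f.unop.a, by
    have hnat := η.hom.naturality f.unop.a
    have hcomm := f.unop.comm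
    dsimp at hnat ⊢
    simp only [Category.assoc]
    rw [← Category.assoc, hnat, Category.assoc, ← Functor.map_comp, ← Functor.map_comp]
    congr 2
    apply Quiver.Hom.unop_inj
    simp [hcomm]⟩
  map_id X := DHom.ext rfl rfl
  map_comp f g := DHom.ext rfl rfl

namespace DObj

@[ext]
lemma hom_ext {X Y : DObj D} {f g : X ⟶ Y} (ha : f.a = g.a) (hb : f.b = g.b) : f = g :=
  DHom.ext ha hb

@[simp]
lemma comp_a {X Y Z : DObj D} (f : X ⟶ Y) (g : Y ⟶ Z) : (f ≫ g).a = f.a ≫ g.a := rfl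

@[simp]
lemma comp_b {X Y Z : DObj D} (f : X ⟶ Y) (g : Y ⟶ Z) : (f ≫ g).b = g.b ≫ f.b := rfl

@[simp]
lemma eqToHom_a {X Y : DObj D} (h : X = Y) :
    (eqToHom h).a = eqToHom (congrArg DObj.c h) := by
  subst h; rfl

@[simp]
lemma eqToHom_b {X Y : DObj D} (h : X = Y) :
    (eqToHom h).b = eqToHom (congrArg DObj.d h.symm) := by
  subst h; rfl

end DObj

section StrictDuality

variable (η : 𝟭 C ≅ D.rightOp ⋙ D)

@[simp]
lemma strictD_obj_c (X : (DObj D)ᵒᵖ) : ((strictD η).obj X).c = X.unop.d := rfl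

@[simp]
lemma strictD_obj_d (X : (DObj D)ᵒᵖ) : ((strictD η).obj X).d = X.unop.c := rfl

@[simp]
lemma strictD_map_a {X Y : (DObj D)ᵒᵖ} (f : X ⟶ Y) : ((strictD η).map f).a = f.unop.b := rfl

@[simp]
lemma strictD_map_b {X Y : (DObj D)ᵒᵖ} (f : X ⟶ Y) : ((strictD η).map f).b = f.unop.a := rfl

lemma unit_comp_map_map_comp_map_unit
    (htri : ∀ c : C, η.hom.app (D.obj (op c)) ≫ D.map (η.hom.app c).op = 𝟙 (D.obj (op c)))
    {c d : C} (φ : d ⟶ D.obj (op c)) :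
    η.hom.app d ≫ D.map (D.map φ.op).op ≫ D.map (η.hom.app c).op = φ := by
  have hnat : η.hom.app d ≫ D.map (D.map φ.op).op = φ ≫ η.hom.app (D.obj (op c)) :=
    (η.hom.naturality φ).symm
  rw [reassoc_of% hnat, htri, Category.comp_id]

lemma strictD_rightOp_strictD_obj
    (htri : ∀ c : C, η.hom.app (D.obj (op c)) ≫ D.map (η.hom.app c).op = 𝟙 (D.obj (op c)))
    (X : DObj D) : ((strictD η).rightOp ⋙ strictD η).obj X = X := by
  obtain ⟨c, d, φ⟩ := X
  show DObj.mk c d _ = DObj.mk c d φ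
  congr 1
  ext
  simpa [strictD] using unit_comp_map_map_comp_map_unit η htri φ.hom

end StrictDuality

/-- `𝔇` is a well-defined functor (the construction above), and `𝔇 ∘ 𝔇^op` is the
identity functor of `𝒟C`: `𝔇` is a strict duality. -/
theorem stmt2 (η : 𝟭 C ≅ D.rightOp ⋙ D)
    (htri : ∀ c : C, η.hom.app (D.obj (op c)) ≫ D.map (η.hom.app c).op = 𝟙 (D.obj (op c))) :
    (strictD η).rightOp ⋙ strictD η = 𝟭 (DObj D) := by
  refine CategoryTheory.Functor.ext (strictD_rightOp_strictD_obj η htri) fun X Y f => ?_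
  ext
  · simp only [Functor.comp_obj, Functor.rightOp_obj, strictD_obj_c, strictD_obj_d,
      Functor.comp_map, Functor.rightOp_map, strictD_map_a, Quiver.Hom.unop_op, Functor.id_obj,
      Functor.id_map, DObj.comp_a, DObj.eqToHom_a, eqToHom_naturality, eqToHom_refl,
      Category.id_comp]
    -- the remaining `eqToHom` is between definitionally equal objects, hence an identity
    exact (Category.id_comp _).symm
  · simp
end

section
/- Let J be a category, F : J → J a functor, and U : id ⇒ F a natural transformation satisfying F(U_i) = U_{F(i)} for every object i of J. Fix an object i and consider the comma category i/F whose objects are pairs (i', f : i → F(i')) and whose morphisms (i', f) → (i'', g) are morphisms a : i' → i'' with F(a) ∘ f = g. Define G : i/F → i/F by G(i', f) = (F(i'), F(U_{i'}) ∘ f) and G(a) = F(a). Then: (1) G is a well-defined functor; (2) the maps U_{i'} : i' → F(i') define a natural transformation id_{i/F} ⇒ G; and (3) the maps f : i → F(i') themselves define a natural transformation Δ ⇒ G, where Δ is the constant functor at the object (i, U_i). In particular, the comma category i/F is connected (and its nerve is contractible). -/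
/-! Every object `(i', f)` of `i/F` is joined to `(i, U_i)` by the cospan
`(i', f) ⟶ G(i', f) ⟵ (i, U_i)` formed by `U_{i'}` and `f`, so `i/F` is connected. -/

open CategoryTheory

variable {J : Type*} [Category J]

/-- The endofunctor `G` of the comma category `i/F` induced by a natural transformation
`U : id ⇒ F` with `F(U_i) = U_{F(i)}`: `G(i', f) = (F(i'), F(U_{i'}) ∘ f)`, `G(a) = F(a)`. -/
def shiftG (F : J ⥤ J) (U : 𝟭 J ⟶ F) (hU : ∀ x : J, F.map (U.app x) = U.app (F.obj x))
    (i : J) : StructuredArrow i F ⥤ StructuredArrow i F where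
  obj X := StructuredArrow.mk (X.hom ≫ F.map (U.app X.right))
  map {X Y} a := StructuredArrow.homMk (F.map a.right) (by
    have w := StructuredArrow.w a
    dsimp
    rw [Category.assoc, ← Functor.map_comp, ← U.naturality a.right]
    dsimp
    rw [Functor.map_comp, ← Category.assoc, w])
  map_id X := by
    apply CommaMorphism.ext <;> simp
  map_comp f g := by
    apply CommaMorphism.ext <;> simp

theorem isConnected_of_natTrans_from_id_and_const {C : Type*} [Category C] {G : C ⥤ C}
    (c : C) (α : 𝟭 C ⟶ G) (β : (Functor.const C).obj c ⟶ G) : IsConnected C := by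
  have : Nonempty C := ⟨c⟩
  have zigzag_from_c (j : C) : Zigzag c j := Zigzag.of_hom_inv (β.app j) (α.app j)
  exact zigzag_isConnected fun j₁ j₂ => (zigzag_from_c j₁).symm.trans (zigzag_from_c j₂)

namespace shiftG

variable (F : J ⥤ J) (U : 𝟭 J ⟶ F) (hU : ∀ x : J, F.map (U.app x) = U.app (F.obj x)) (i : J)

def unit : 𝟭 (StructuredArrow i F) ⟶ shiftG F U hU i where
  app X := StructuredArrow.homMk (U.app X.right) rfl
  naturality _ _ a := by
    ext
    exact U.naturality a.right

def fromConst :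
    (Functor.const (StructuredArrow i F)).obj (StructuredArrow.mk (U.app i)) ⟶
      shiftG F U hU i where
  app X := StructuredArrow.homMk X.hom (by
    -- `F(U_{i'}) = U_{F i'}` turns the square into the naturality square of `U` at `X.hom`
    dsimp [shiftG]
    rw [hU]
    exact (U.naturality X.hom).symm)
  naturality _ _ a := by
    ext
    dsimp [shiftG]
    rw [Category.id_comp]
    exact (StructuredArrow.w a).symm

end shiftG

/-- The maps `U_{i'}` give a natural transformation `id ⇒ G`, the maps `f : i → F(i')`
themselves give a natural transformation `Δ_{(i, U_i)} ⇒ G`, and in particular the comma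
category `i/F` is connected. -/
theorem stmt14 (F : J ⥤ J) (U : 𝟭 J ⟶ F) (hU : ∀ x : J, F.map (U.app x) = U.app (F.obj x))
    (i : J) :
    (∃ t : 𝟭 (StructuredArrow i F) ⟶ shiftG F U hU i,
      ∀ X : StructuredArrow i F, (t.app X).right = U.app X.right) ∧
    (∃ t' : (Functor.const (StructuredArrow i F)).obj (StructuredArrow.mk (U.app i)) ⟶
        shiftG F U hU i,
      ∀ X : StructuredArrow i F, (t'.app X).right = X.hom) ∧
    IsConnected (StructuredArrow i F) :=
  ⟨⟨shiftG.unit F U hU i, fun _ => rfl⟩, ⟨shiftG.fromConst F U hU i, fun _ => rfl⟩,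
    isConnected_of_natTrans_from_id_and_const _ (shiftG.unit F U hU i)
      (shiftG.fromConst F U hU i)⟩
end
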